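/- Associativity of Heisenberg multiplication at the level of generating functions: contracting the Gaussian generating functions for multiplication in the Weyl algebra in two ways gives the same result, namely G(m^{12}_k) // G(m^{k3}_ℓ) = G(m^{23}_k) // G(m^{1k}_ℓ) = e^{(π_1+π_2+π_3) p_ℓ + (ξ_1+ξ_2+ξ_3) x_ℓ - ξ_1 π_2 - (ξ_1+ξ_2) π_3}. -/

import Mathlib

noncomputable section

/-- The multi-index factorial. -/
def mfact {J : Type*} (n : J →₀ ℕ) : ℕ := n.prod fun _ k => k.factorial

/-- The exponential `e^E = Σ_k E^k/k!` of an element `E` of `ℚ[z_τ][[ζ_σ]]` all of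
whose monomials contain at least one series variable, computed coefficientwise
(only `k ≤ |m|` contributes to the coefficient at `ζ^m`). -/
def expQ {σ τ : Type*} (E : MvPowerSeries σ (MvPolynomial τ ℚ)) :
    MvPowerSeries σ (MvPolynomial τ ℚ) :=
  fun m => ∑ k ∈ Finset.range (m.sum (fun _ e => e) + 1),
    ((k.factorial : ℚ)⁻¹) • MvPowerSeries.coeff (R := MvPolynomial τ ℚ) m (E ^ k)

/-- Contraction (composition) of generating functions `f ∈ ℚ[z_K][[ζ_J]]`,
`g ∈ ℚ[z_L][[ζ_K]]`:  `f ∥ g = (f|_{z_K ↦ ∂_{ζ_K}} · g)|_{ζ_K = 0}`. -/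
def contractGF {J K L : Type*} (f : MvPowerSeries J (MvPolynomial K ℚ))
    (g : MvPowerSeries K (MvPolynomial L ℚ)) :
    MvPowerSeries J (MvPolynomial L ℚ) :=
  fun n => ∑ m ∈ (MvPowerSeries.coeff (R := MvPolynomial K ℚ) n f).support,
    ((mfact m : ℚ) *
        MvPolynomial.coeff m (MvPowerSeries.coeff (R := MvPolynomial K ℚ) n f)) •
      MvPowerSeries.coeff (R := MvPolynomial L ℚ) m g

/-- Greek (series) variables for three input strands: `(i, false) = π_{i+1}`,
`(i, true) = ξ_{i+1}`. -/
abbrev Greek3 := Fin 3 × Bool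

/-- Variables for a two-strand object (e.g. `{k, 3}`): `(s, false) = p`-variable,
`(s, true) = x`-variable of strand `s`. -/
abbrev Two := Fin 2 × Bool

/-- series variable. -/
def Xs {σ τ : Type*} (v : σ) : MvPowerSeries σ (MvPolynomial τ ℚ) := MvPowerSeries.X v

/-- polynomial (output) variable. -/
def Cp {σ τ : Type*} (w : τ) : MvPowerSeries σ (MvPolynomial τ ℚ) :=
  MvPowerSeries.C (σ := σ) (R := MvPolynomial τ ℚ) (MvPolynomial.X w)

/-- `G(m^{12}_k ⊗ id_3)`-exponent: `(π_1+π_2)p_k + (ξ_1+ξ_2)x_k - ξ_1π_2 + π_3p_3 + ξ_3x_3`,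
where in the codomain strand `0` is `k` and strand `1` is the spectator `3`. -/
def E₁ : MvPowerSeries Greek3 (MvPolynomial Two ℚ) :=
  (Xs (0, false) + Xs (1, false)) * Cp (0, false) +
    (Xs (0, true) + Xs (1, true)) * Cp (0, true) -
    Xs (0, true) * Xs (1, false) +
    Xs (2, false) * Cp (1, false) + Xs (2, true) * Cp (1, true)

/-- `G(m^{k3}_ℓ)`-exponent: `(π_k+π_3)p_ℓ + (ξ_k+ξ_3)x_ℓ - ξ_kπ_3`
(strand `0` is `k`, strand `1` is `3`; `false = p_ℓ`, `true = x_ℓ`). -/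
def E₂ : MvPowerSeries Two (MvPolynomial Bool ℚ) :=
  (Xs (0, false) + Xs (1, false)) * Cp false +
    (Xs (0, true) + Xs (1, true)) * Cp true - Xs (0, true) * Xs (1, false)

/-- `G(id_1 ⊗ m^{23}_k)`-exponent (strand `0` is the spectator `1`, strand `1` is `k`). -/
def E₁' : MvPowerSeries Greek3 (MvPolynomial Two ℚ) :=
  Xs (0, false) * Cp (0, false) + Xs (0, true) * Cp (0, true) +
    (Xs (1, false) + Xs (2, false)) * Cp (1, false) +
    (Xs (1, true) + Xs (2, true)) * Cp (1, true) -
    Xs (1, true) * Xs (2, false)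

/-- `G(m^{1k}_ℓ)`-exponent (strand `0` is `1`, strand `1` is `k`). -/
def E₂' : MvPowerSeries Two (MvPolynomial Bool ℚ) :=
  (Xs (0, false) + Xs (1, false)) * Cp false +
    (Xs (0, true) + Xs (1, true)) * Cp true - Xs (0, true) * Xs (1, false)

/-- The associativity target exponent:
`(π_1+π_2+π_3)p_ℓ + (ξ_1+ξ_2+ξ_3)x_ℓ - ξ_1π_2 - (ξ_1+ξ_2)π_3`. -/
def E₃ : MvPowerSeries Greek3 (MvPolynomial Bool ℚ) :=
  (Xs (0, false) + Xs (1, false) + Xs (2, false)) * Cp false +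
    (Xs (0, true) + Xs (1, true) + Xs (2, true)) * Cp true -
    Xs (0, true) * Xs (1, false) -
    (Xs (0, true) + Xs (1, true)) * Xs (2, false)

/-!
Write the exponent of `G(m^{12}_k)` as `Q + ∑_w c_w z_w`: a part `Q` in the Greek variables
only, plus a part linear in the contracted variables `z_w`. The `z^m`-coefficient of
`e^{Q + ∑ c_w z_w}` is `e^Q c^m / m!`, and contraction pairs `z^m` with `m!` times the
`ζ^m`-coefficient of the second factor, so contracting against `g` substitutes `ζ_w ↦ c_w`
in `g` and multiplies by `e^Q`. Substitution is a ring homomorphism commuting with `exp`, hence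
`e^{Q + ∑ c_w z_w} // e^{E} = e^{Q + E(c)}`, and both bracketings reduce to an identity between
quadratic exponents.
-/

open Finset MvPowerSeries
open scoped Nat

section TruncatedExp

variable {A : Type*} [CommRing A] [Algebra ℚ A]

/-- The binomial theorem divided by `m!`, read off from `e^{xX} e^{yX} = e^{(x+y)X}`. -/
theorem inv_factorial_smul_add_pow (x y : A) (m : ℕ) :
    (m ! : ℚ)⁻¹ • (x + y) ^ m =
      ∑ k ∈ range (m + 1), ((k ! : ℚ)⁻¹ • x ^ k) * (((m - k) ! : ℚ)⁻¹ • y ^ (m - k)) := by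
  have := congrArg (PowerSeries.coeff m) (PowerSeries.exp_mul_exp_eq_exp_add x y)
  simp only [PowerSeries.coeff_mul, PowerSeries.coeff_rescale, PowerSeries.coeff_exp,
    Finset.Nat.sum_antidiagonal_eq_sum_range_succ_mk] at this
  simp only [Algebra.smul_def, one_div] at this ⊢
  rw [mul_comm, ← this]
  exact sum_congr rfl fun k _ => by ring

theorem sum_inv_factorial_smul_add_pow {N : ℕ} {x y : A}
    (hxy : ∀ i j, N ≤ i + j → x ^ i * y ^ j = 0) :
    ∑ m ∈ range N, (m ! : ℚ)⁻¹ • (x + y) ^ m =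
      (∑ i ∈ range N, (i ! : ℚ)⁻¹ • x ^ i) * ∑ j ∈ range N, (j ! : ℚ)⁻¹ • y ^ j := by
  simp_rw [inv_factorial_smul_add_pow,
    sum_range_diag_flip N fun i j => ((i ! : ℚ)⁻¹ • x ^ i) * ((j ! : ℚ)⁻¹ • y ^ j), sum_mul,
    mul_sum]
  refine sum_congr rfl fun i _ => sum_subset (range_subset_range.2 (Nat.sub_le N i)) ?_
  intro j _ hj
  rw [mem_range, not_lt] at hj
  rw [smul_mul_smul_comm, hxy i j (by omega), smul_zero]

end TruncatedExp

namespace MvPowerSeries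

section OrderIdeal

variable {σ R : Type*} [CommRing R]

theorem coeff_pow_eq_zero_of_degree_lt {E : MvPowerSeries σ R} (hE : constantCoeff E = 0)
    {d : σ →₀ ℕ} {k : ℕ} (h : d.degree < k) : coeff d (E ^ k) = 0 :=
  coeff_of_lt_order ((Nat.cast_lt.2 h).trans_le (le_order_pow_of_constantCoeff_eq_zero k hE))

theorem coeff_prod_pow_eq_zero_of_degree_lt {τ : Type*} [Fintype τ]
    {c : τ → MvPowerSeries σ R} (hc : ∀ w, constantCoeff (c w) = 0) {n : σ →₀ ℕ}
    {m : τ →₀ ℕ} (h : n.degree < m.degree) : coeff n (∏ w, c w ^ m w) = 0 := by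
  refine coeff_of_lt_order (lt_of_lt_of_le ?_ (le_order_prod _ _))
  calc (n.degree : ℕ∞) < m.degree := by exact_mod_cast h
    _ = ∑ w, ((m w : ℕ) : ℕ∞) := by rw [Finsupp.degree_eq_sum]; push_cast; rfl
    _ ≤ _ := sum_le_sum fun w _ => le_order_pow_of_constantCoeff_eq_zero _ (hc w)

variable (σ R) in
/-- Identities between exponentials are proved modulo `orderIdeal σ R N` for every `N`: there
`exp E` may be replaced by the polynomial `∑_{k<N} E^k / k!`. -/
def orderIdeal (N : ℕ) : Ideal (MvPowerSeries σ R) where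
  carrier := {f | (N : ℕ∞) ≤ f.order}
  zero_mem' := by simp
  add_mem' hf hg := (le_min hf hg).trans min_order_le_add
  smul_mem' _ _ hf := hf.trans (le_add_self.trans le_order_mul)

theorem eq_of_forall_sub_mem_orderIdeal {f g : MvPowerSeries σ R}
    (h : ∀ N, f - g ∈ orderIdeal σ R N) : f = g := by
  rw [← sub_eq_zero, ← order_eq_top_iff]
  exact top_le_iff.1 (ENat.forall_natCast_le_iff_le.1 fun N _ => h N)

theorem pow_mul_pow_mem_orderIdeal {E F : MvPowerSeries σ R} (hE : constantCoeff E = 0)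
    (hF : constantCoeff F = 0) {N i j : ℕ} (h : N ≤ i + j) :
    E ^ i * F ^ j ∈ orderIdeal σ R N := by
  show (N : ℕ∞) ≤ _
  calc (N : ℕ∞) ≤ i + j := by exact_mod_cast h
    _ ≤ (E ^ i).order + (F ^ j).order :=
      add_le_add (le_order_pow_of_constantCoeff_eq_zero i hE)
        (le_order_pow_of_constantCoeff_eq_zero j hF)
    _ ≤ _ := le_order_mul

theorem subst_mem_orderIdeal {τ : Type*} [Finite σ] {a : σ → MvPowerSeries τ R}
    (ha : ∀ s, constantCoeff (a s) = 0) {N : ℕ} {f : MvPowerSeries σ R}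
    (hf : f ∈ orderIdeal σ R N) : subst a f ∈ orderIdeal τ R N := by
  have h1 : 1 ≤ ⨅ s, (a s).order :=
    le_iInf fun s => one_le_order_iff_constCoeff_eq_zero.2 (ha s)
  calc (N : ℕ∞) = 1 * N := (one_mul _).symm
    _ ≤ _ := mul_le_mul' h1 hf
    _ ≤ _ := le_order_subst (hasSubst_of_constantCoeff_zero ha) f

end OrderIdeal

section Exp

variable {σ R : Type*} [CommRing R] [Algebra ℚ R]

/-- Only meaningful when `constantCoeff E = 0`: then the terms with `k > degree m` vanish and the
truncation at `degree m` loses nothing. -/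
def exp (E : MvPowerSeries σ R) : MvPowerSeries σ R :=
  fun m => ∑ k ∈ range (m.degree + 1), (k ! : ℚ)⁻¹ • coeff m (E ^ k)

theorem coeff_exp (E : MvPowerSeries σ R) (m : σ →₀ ℕ) :
    coeff m (exp E) = ∑ k ∈ range (m.degree + 1), (k ! : ℚ)⁻¹ • coeff m (E ^ k) :=
  rfl

theorem exp_sub_sum_mem_orderIdeal {E : MvPowerSeries σ R} (hE : constantCoeff E = 0) (N : ℕ) :
    exp E - ∑ k ∈ range N, (k ! : ℚ)⁻¹ • E ^ k ∈ orderIdeal σ R N := by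
  refine le_order fun d hd => ?_
  have hdN : d.degree < N := by exact_mod_cast hd
  rw [map_sub, map_sum, coeff_exp, sub_eq_zero]
  refine sum_subset (range_subset_range.2 hdN) fun k _ hk => ?_
  rw [mem_range, not_lt] at hk
  rw [coeff_pow_eq_zero_of_degree_lt hE (by omega), smul_zero]

theorem mk_exp {E : MvPowerSeries σ R} (hE : constantCoeff E = 0) (N : ℕ) :
    Ideal.Quotient.mk (orderIdeal σ R N) (exp E) =
      ∑ k ∈ range N, (k ! : ℚ)⁻¹ • Ideal.Quotient.mk (orderIdeal σ R N) E ^ k := by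
  simp only [Ideal.Quotient.eq.2 (exp_sub_sum_mem_orderIdeal hE N), map_sum, map_rat_smul,
    map_pow]

theorem exp_add {E F : MvPowerSeries σ R} (hE : constantCoeff E = 0)
    (hF : constantCoeff F = 0) : exp (E + F) = exp E * exp F := by
  refine eq_of_forall_sub_mem_orderIdeal fun N => Ideal.Quotient.eq.1 ?_
  rw [map_mul, mk_exp (by rw [map_add, hE, hF, add_zero]), mk_exp hE, mk_exp hF, map_add]
  refine sum_inv_factorial_smul_add_pow fun i j hij => ?_
  rw [← map_pow, ← map_pow, ← map_mul, Ideal.Quotient.eq_zero_iff_mem]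
  exact pow_mul_pow_mem_orderIdeal hE hF hij

theorem map_exp {S : Type*} [CommRing S] [Algebra ℚ S] (f : R →+* S) (E : MvPowerSeries σ R) :
    map f (exp E) = exp (map f E) := by
  ext m
  simp only [coeff_map, coeff_exp, map_sum, map_rat_smul, ← map_pow]

theorem subst_exp {τ : Type*} [Finite σ] {a : σ → MvPowerSeries τ R}
    (ha : ∀ s, constantCoeff (a s) = 0) {G : MvPowerSeries σ R} (hG : constantCoeff G = 0) :
    subst a (exp G) = exp (subst a G) := by
  have has : HasSubst a := hasSubst_of_constantCoeff_zero ha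
  refine eq_of_forall_sub_mem_orderIdeal fun N => ?_
  have h1 := subst_mem_orderIdeal ha (exp_sub_sum_mem_orderIdeal hG N)
  have h2 := exp_sub_sum_mem_orderIdeal (constantCoeff_subst_eq_zero has ha hG) N
  rw [← substAlgHom_apply has, map_sub, map_sum] at h1
  simp only [map_rat_smul, map_pow, substAlgHom_apply] at h1
  convert sub_mem h1 h2 using 1
  abel

end Exp

end MvPowerSeries

section Gaussian

variable {σ τ : Type*} [Fintype τ]

def linearExponent (c : τ → MvPowerSeries σ ℚ) :
    MvPowerSeries σ (MvPolynomial τ ℚ) :=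
  ∑ w, map (algebraMap ℚ _) (c w) * C (MvPolynomial.X w)

theorem constantCoeff_linearExponent {c : τ → MvPowerSeries σ ℚ}
    (hc : ∀ w, constantCoeff (c w) = 0) : constantCoeff (linearExponent c) = 0 := by
  simp [linearExponent, hc]

theorem mfact_eq_prod (m : τ →₀ ℕ) : mfact m = ∏ w, (m w)! :=
  Finsupp.prod_fintype _ _ fun _ => rfl

theorem coeff_coeff_linearExponent_pow [DecidableEq τ] (c : τ → MvPowerSeries σ ℚ)
    (n : σ →₀ ℕ) (m : τ →₀ ℕ) (k : ℕ) :
    MvPolynomial.coeff m (coeff n (linearExponent c ^ k)) =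
      if m.degree = k then Nat.multinomial univ m * coeff n (∏ w, c w ^ m w) else 0 := by
  have hterm (d : τ → ℕ) : (Nat.multinomial univ d : MvPowerSeries σ (MvPolynomial τ ℚ)) *
      ∏ w, (map (algebraMap ℚ _) (c w) * C (MvPolynomial.X w)) ^ d w =
      map (algebraMap ℚ _) ((Nat.multinomial univ d : MvPowerSeries σ ℚ) * ∏ w, c w ^ d w) *
        C (MvPolynomial.monomial (Finsupp.equivFunOnFinite.symm d) 1) := by
    rw [MvPolynomial.monomial_eq, MvPolynomial.C_1, one_mul,
      Finsupp.prod_fintype _ _ fun _ => pow_zero _]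
    simp only [mul_pow, prod_mul_distrib, map_mul, map_natCast, map_prod, map_pow, mul_assoc,
      Finsupp.coe_equivFunOnFinite_symm]
  rw [linearExponent, Finset.sum_pow_eq_sum_piAntidiag, sum_congr rfl fun d _ => hterm d]
  simp only [map_sum, coeff_mul_C, coeff_map, MvPolynomial.algebraMap_eq,
    MvPolynomial.C_mul_monomial, mul_one, MvPolynomial.coeff_sum, MvPolynomial.coeff_monomial,
    Equiv.symm_apply_eq, Finsupp.equivFunOnFinite_apply, sum_ite_eq', mem_piAntidiag,
    Finsupp.degree_eq_sum, mem_univ, implies_true, and_true, ← map_natCast (C (σ := σ)),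
    coeff_C_mul]
  rfl

theorem coeff_coeff_exp_linearExponent [DecidableEq τ] {c : τ → MvPowerSeries σ ℚ}
    (hc : ∀ w, constantCoeff (c w) = 0) (n : σ →₀ ℕ) (m : τ →₀ ℕ) :
    MvPolynomial.coeff m (coeff n (exp (linearExponent c))) =
      (mfact m : ℚ)⁻¹ * coeff n (m.prod fun w e => c w ^ e) := by
  simp only [coeff_exp, MvPolynomial.coeff_sum, MvPolynomial.coeff_smul,
    coeff_coeff_linearExponent_pow, smul_eq_mul, mul_ite, mul_zero, sum_ite_eq, mem_range,
    Finsupp.prod_fintype _ _ fun _ => pow_zero _]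
  split_ifs with h
  · have hspec := Nat.multinomial_spec univ m
    rw [← Finsupp.degree_eq_sum, ← mfact_eq_prod] at hspec
    have hmfact : (mfact m : ℚ) ≠ 0 := by rw [mfact_eq_prod]; positivity
    have hmult : (Nat.multinomial univ m : ℚ) ≠ 0 := by
      exact_mod_cast (Nat.multinomial_pos _ _).ne'
    rw [← mul_assoc, ← hspec]
    congr 1
    push_cast
    field_simp [hmfact, hmult]
  · rw [coeff_prod_pow_eq_zero_of_degree_lt hc (by omega), mul_zero]

end Gaussian

section Contraction

variable {J K L : Type*}

theorem coeff_contractGF_of_support_subset (f : MvPowerSeries J (MvPolynomial K ℚ))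
    (g : MvPowerSeries K (MvPolynomial L ℚ)) (n : J →₀ ℕ) {S : Finset (K →₀ ℕ)}
    (hS : (coeff n f).support ⊆ S) :
    coeff n (contractGF f g) =
      ∑ m ∈ S, ((mfact m : ℚ) * MvPolynomial.coeff m (coeff n f)) • coeff m g :=
  sum_subset hS fun m _ hm => by rw [MvPolynomial.notMem_support_iff.1 hm, mul_zero, zero_smul]

theorem contractGF_map_mul (A : MvPowerSeries J ℚ) (f : MvPowerSeries J (MvPolynomial K ℚ))
    (g : MvPowerSeries K (MvPolynomial L ℚ)) :
    contractGF (map (algebraMap ℚ _) A * f) g = map (algebraMap ℚ _) A * contractGF f g := by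
  classical
  refine MvPowerSeries.ext fun n => ?_
  let S := (coeff n (map (algebraMap ℚ _) A * f)).support ∪
    (antidiagonal n).biUnion fun p => (coeff p.2 f).support
  have hRHS : coeff n (map (algebraMap ℚ _) A * contractGF f g) =
      ∑ p ∈ antidiagonal n, algebraMap ℚ _ (coeff p.1 A) *
        ∑ m ∈ S, ((mfact m : ℚ) * MvPolynomial.coeff m (coeff p.2 f)) • coeff m g := by
    refine (coeff_mul _ _ _).trans (sum_congr rfl fun p hp => ?_)
    rw [coeff_map, coeff_contractGF_of_support_subset f g p.2
      ((subset_biUnion_of_mem (fun p => (coeff p.2 f).support) hp).trans subset_union_right)]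
  rw [hRHS, coeff_contractGF_of_support_subset _ _ _ subset_union_left, coeff_mul]
  simp only [coeff_map, MvPolynomial.coeff_sum, MvPolynomial.algebraMap_eq,
    MvPolynomial.coeff_C_mul, mul_sum, sum_smul]
  rw [sum_comm]
  refine sum_congr rfl fun p _ => sum_congr rfl fun m _ => ?_
  simp only [Algebra.smul_def, MvPolynomial.algebraMap_eq, map_mul]
  ring

theorem contractGF_exp_linearExponent [Fintype K] [DecidableEq K] {c : K → MvPowerSeries J ℚ}
    (hc : ∀ w, constantCoeff (c w) = 0) (g : MvPowerSeries K (MvPolynomial L ℚ)) :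
    contractGF (exp (linearExponent c)) g =
      subst (fun w => map (algebraMap ℚ (MvPolynomial L ℚ)) (c w)) g := by
  have ha : HasSubst fun w => map (algebraMap ℚ (MvPolynomial L ℚ)) (c w) :=
    hasSubst_of_constantCoeff_zero fun w => by rw [constantCoeff_map, hc, map_zero]
  refine MvPowerSeries.ext fun n => ?_
  have key (m : K →₀ ℕ) :
      (mfact m : ℚ) * MvPolynomial.coeff m (coeff n (exp (linearExponent c))) =
        coeff n (m.prod fun w e => c w ^ e) := by
    rw [coeff_coeff_exp_linearExponent hc, ← mul_assoc,
      mul_inv_cancel₀ (by rw [mfact_eq_prod]; positivity), one_mul]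
  have hterm (m : K →₀ ℕ) :
      coeff m g • coeff n (m.prod fun w e => map (algebraMap ℚ (MvPolynomial L ℚ)) (c w) ^ e) =
        coeff n (m.prod fun w e => c w ^ e) • coeff m g := by
    simp only [← map_pow, ← map_finsuppProd, coeff_map, smul_eq_mul, Algebra.smul_def, mul_comm]
  rw [coeff_subst ha, finsum_congr hterm,
    finsum_eq_sum_of_support_subset (s := (coeff n (exp (linearExponent c))).support)]
  · exact sum_congr rfl fun m _ => by rw [key]
  · intro m hm
    rw [Finset.mem_coe, MvPolynomial.mem_support_iff]
    intro h
    rw [Function.mem_support, ← key, h, mul_zero, zero_smul] at hm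
    exact hm rfl

theorem contractGF_exp_exp [Fintype K] [DecidableEq K] {Q : MvPowerSeries J ℚ}
    {c : K → MvPowerSeries J ℚ} (hQ : constantCoeff Q = 0) (hc : ∀ w, constantCoeff (c w) = 0)
    {G : MvPowerSeries K (MvPolynomial L ℚ)} (hG : constantCoeff G = 0) :
    contractGF (exp (map (algebraMap ℚ _) Q + linearExponent c)) (exp G) =
      exp (map (algebraMap ℚ _) Q +
        subst (fun w => map (algebraMap ℚ (MvPolynomial L ℚ)) (c w)) G) := by
  have hQK : constantCoeff (map (algebraMap ℚ (MvPolynomial K ℚ)) Q) = 0 := by simp [hQ]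
  have hQL : constantCoeff (map (algebraMap ℚ (MvPolynomial L ℚ)) Q) = 0 := by simp [hQ]
  have hcL (w : K) : constantCoeff (map (algebraMap ℚ (MvPolynomial L ℚ)) (c w)) = 0 := by
    simp [hc]
  rw [exp_add hQK (constantCoeff_linearExponent hc), ← map_exp, contractGF_map_mul,
    contractGF_exp_linearExponent hc, subst_exp hcL hG, map_exp,
    exp_add hQL (constantCoeff_subst_eq_zero (hasSubst_of_constantCoeff_zero hcL) hcL hG)]

end Contraction

section Associativity

theorem expQ_eq_exp {σ τ : Type*} (E : MvPowerSeries σ (MvPolynomial τ ℚ)) :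
    expQ E = exp E :=
  rfl

def Q₁ : MvPowerSeries Greek3 ℚ := -(X (0, true) * X (1, false))

def c₁ (w : Two) : MvPowerSeries Greek3 ℚ := ![X (0, w.2) + X (1, w.2), X (2, w.2)] w.1

def Q₁' : MvPowerSeries Greek3 ℚ := -(X (1, true) * X (2, false))

def c₁' (w : Two) : MvPowerSeries Greek3 ℚ := ![X (0, w.2), X (1, w.2) + X (2, w.2)] w.1

theorem constantCoeff_c₁ (w : Two) : constantCoeff (c₁ w) = 0 := by
  obtain ⟨i, b⟩ := w
  fin_cases i <;> simp [c₁]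

theorem constantCoeff_c₁' (w : Two) : constantCoeff (c₁' w) = 0 := by
  obtain ⟨i, b⟩ := w
  fin_cases i <;> simp [c₁']

theorem E₁_eq_map_add_linearExponent : E₁ = map (algebraMap ℚ _) Q₁ + linearExponent c₁ := by
  simp only [E₁, Q₁, c₁, linearExponent, Xs, Cp, Fintype.sum_prod_type, Fin.sum_univ_two,
    Fintype.sum_bool, map_neg, map_mul, map_add, map_X, Matrix.cons_val_zero,
    Matrix.cons_val_one]
  ring

theorem E₁'_eq_map_add_linearExponent :
    E₁' = map (algebraMap ℚ _) Q₁' + linearExponent c₁' := by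
  simp only [E₁', Q₁', c₁', linearExponent, Xs, Cp, Fintype.sum_prod_type, Fin.sum_univ_two,
    Fintype.sum_bool, map_neg, map_mul, map_add, map_X, Matrix.cons_val_zero,
    Matrix.cons_val_one]
  ring

theorem map_Q₁_add_subst_E₂ :
    map (algebraMap ℚ _) Q₁ + subst (fun w => map (algebraMap ℚ (MvPolynomial Bool ℚ)) (c₁ w)) E₂ =
      E₃ := by
  have ha : HasSubst fun w => map (algebraMap ℚ (MvPolynomial Bool ℚ)) (c₁ w) :=
    hasSubst_of_constantCoeff_zero fun w => by simp [constantCoeff_c₁]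
  simp only [E₂, Xs, Cp, subst_add ha, subst_sub ha, subst_mul ha, subst_X ha, subst_C]
  simp only [E₃, Q₁, c₁, Xs, Cp, map_neg, map_mul, map_add, map_X, Matrix.cons_val_zero,
    Matrix.cons_val_one]
  ring

theorem map_Q₁'_add_subst_E₂' :
    map (algebraMap ℚ _) Q₁' +
        subst (fun w => map (algebraMap ℚ (MvPolynomial Bool ℚ)) (c₁' w)) E₂' = E₃ := by
  have ha : HasSubst fun w => map (algebraMap ℚ (MvPolynomial Bool ℚ)) (c₁' w) :=
    hasSubst_of_constantCoeff_zero fun w => by simp [constantCoeff_c₁']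
  simp only [E₂', Xs, Cp, subst_add ha, subst_sub ha, subst_mul ha, subst_X ha, subst_C]
  simp only [E₃, Q₁', c₁', Xs, Cp, map_neg, map_mul, map_add, map_X, Matrix.cons_val_zero,
    Matrix.cons_val_one]
  ring

/-- Associativity of the Weyl-algebra multiplication at the level of
Gaussian generating functions:
`G(m^{12}_k) ∥ G(m^{k3}_ℓ) = G(m^{23}_k) ∥ G(m^{1k}_ℓ)
  = e^{(π_1+π_2+π_3)p_ℓ + (ξ_1+ξ_2+ξ_3)x_ℓ - ξ_1π_2 - (ξ_1+ξ_2)π_3}`. -/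
theorem weyl_gaussian_associativity :
    contractGF (expQ E₁) (expQ E₂) = expQ E₃ ∧
      contractGF (expQ E₁') (expQ E₂') = expQ E₃ := by
  have hE₂ : constantCoeff E₂ = 0 := by simp [E₂, Xs, Cp]
  have hE₂' : constantCoeff E₂' = 0 := by simp [E₂', Xs, Cp]
  simp only [expQ_eq_exp]
  constructor
  · rw [E₁_eq_map_add_linearExponent, contractGF_exp_exp (by simp [Q₁]) constantCoeff_c₁ hE₂,
      map_Q₁_add_subst_E₂]
  · rw [E₁'_eq_map_add_linearExponent,
      contractGF_exp_exp (by simp [Q₁']) constantCoeff_c₁' hE₂',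
      map_Q₁'_add_subst_E₂']

end Associativity
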